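/- arXiv:2408.16899 — 5 statements merged into one kernel-verified Lean document; each statement's English description precedes it below -/
import Mathlib

section
/- Consider the one-step forward-difference gradient estimator built from an inexact function evaluation. Let f : ℝⁿ → ℝ be differentiable with gradient that is L-Lipschitz with respect to the Euclidean norm (L > 0), and let f̂ : ℝⁿ → ℝ satisfy |f̂(y) − f(y)| ≤ δ for all y ∈ ℝⁿ, where δ ≥ 0. Then for every x ∈ ℝⁿ, every μ > 0, and every coordinate index i ∈ {1,…,n}, the forward-difference estimate of the i-th partial derivative satisfies |(f̂(x + μ eᵢ) − f̂(x))/μ − ∂f/∂xᵢ(x)| ≤ (1/2)Lμ + 2δ/μ, where eᵢ is the i-th standard basis vector; consequently the vector of forward-difference estimates satisfies ‖∇̂f(x) − ∇f(x)‖_∞ ≤ (1/2)Lμ + 2δ/μ. -/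
/-!
Along the segment `t ↦ x + t • v` the function `f (x + t • v) - t ⟪∇f x, v⟫` has derivative
`⟪∇f (x + t • v) - ∇f x, v⟫`, of size at most `L t ‖v‖²`; integrating gives the descent lemma
`|f (x + v) - f x - ⟪∇f x, v⟫| ≤ L ‖v‖² / 2`. With `v = μ eᵢ` this bounds the exact forward difference
by `L μ / 2`, and the two inexact evaluations add at most `2 δ / μ`.
-/

open scoped RealInnerProductSpace

section DescentLemma

variable {E : Type*} [NormedAddCommGroup E] [InnerProductSpace ℝ E] [CompleteSpace E]
  {f : E → ℝ} {f' : E → E}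

lemma HasGradientAt.hasDerivAt_comp_add_smul {x v : E} {t : ℝ}
    (hf : HasGradientAt f (f' (x + t • v)) (x + t • v)) :
    HasDerivAt (fun s : ℝ => f (x + s • v)) ⟪f' (x + t • v), v⟫ t := by
  have hline : HasDerivAt (fun s : ℝ => x + s • v) v t := by
    simpa using ((hasDerivAt_id t).smul_const v).const_add x
  simpa [Function.comp_def] using hf.hasFDerivAt.comp_hasDerivAt t hline

lemma abs_sub_sub_inner_le_of_gradient_lipschitz (hf : ∀ x, HasGradientAt f (f' x) x) {L : ℝ}
    (hLip : ∀ y₁ y₂ : E, ‖f' y₁ - f' y₂‖ ≤ L * ‖y₁ - y₂‖) (x v : E) :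
    |f (x + v) - f x - ⟪f' x, v⟫| ≤ L / 2 * ‖v‖ ^ 2 := by
  set g : ℝ → ℝ := fun t => f (x + t • v) - t * ⟪f' x, v⟫ - f x
  have hg : ∀ t, HasDerivAt g (⟪f' (x + t • v), v⟫ - ⟪f' x, v⟫) t := fun t =>
    (((hf _).hasDerivAt_comp_add_smul).sub ((hasDerivAt_id t).mul_const _)).sub_const (f x)
      |>.congr_deriv (by simp)
  have hB : ∀ t, HasDerivAt (fun t : ℝ => L / 2 * ‖v‖ ^ 2 * t ^ 2) (L * ‖v‖ ^ 2 * t) t := fun t =>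
    ((hasDerivAt_pow 2 t).const_mul _).congr_deriv (by ring)
  have hg'_le : ∀ t ∈ Set.Ico (0 : ℝ) 1,
      ‖⟪f' (x + t • v), v⟫ - ⟪f' x, v⟫‖ ≤ L * ‖v‖ ^ 2 * t := fun t ht =>
    calc ‖⟪f' (x + t • v), v⟫ - ⟪f' x, v⟫‖ = ‖⟪f' (x + t • v) - f' x, v⟫‖ := by
          rw [inner_sub_left]
      _ ≤ ‖f' (x + t • v) - f' x‖ * ‖v‖ := norm_inner_le_norm _ _
      _ ≤ L * ‖(x + t • v) - x‖ * ‖v‖ := by gcongr; exact hLip _ _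
      _ = L * ‖v‖ ^ 2 * t := by
          rw [add_sub_cancel_left, norm_smul, Real.norm_of_nonneg ht.1]; ring
  have key := image_norm_le_of_norm_deriv_right_le_deriv_boundary
    (fun t _ => (hg t).continuousAt.continuousWithinAt) (fun t _ => (hg t).hasDerivWithinAt)
    (by simp [g]) hB hg'_le (Set.right_mem_Icc.2 zero_le_one)
  simpa [g, sub_right_comm] using key

end DescentLemma

lemma abs_sub_sub_le_of_abs_sub_le {α : Type*} {f fhat : α → ℝ} {δ : ℝ}
    (happrox : ∀ y, |fhat y - f y| ≤ δ) (a b : α) (c : ℝ) :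
    |fhat a - fhat b - c| ≤ |f a - f b - c| + 2 * δ := by
  calc |fhat a - fhat b - c| = |(f a - f b - c) + (fhat a - f a) - (fhat b - f b)| := by ring_nf
    _ ≤ |f a - f b - c| + |fhat a - f a| + |fhat b - f b| :=
        (abs_sub _ _).trans (add_le_add_left (abs_add_le _ _) _)
    _ ≤ |f a - f b - c| + 2 * δ := by linarith [happrox a, happrox b]

lemma abs_forwardDifference_sub_inner_le {E : Type*} [NormedAddCommGroup E]
    [InnerProductSpace ℝ E] [CompleteSpace E] {f fhat : E → ℝ} {f' : E → E}
    (hf : ∀ x, HasGradientAt f (f' x) x) {L : ℝ}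
    (hLip : ∀ y₁ y₂ : E, ‖f' y₁ - f' y₂‖ ≤ L * ‖y₁ - y₂‖) {δ : ℝ}
    (happrox : ∀ y, |fhat y - f y| ≤ δ) (x u : E) (hu : ‖u‖ = 1) {μ : ℝ} (hμ : 0 < μ) :
    |(fhat (x + μ • u) - fhat x) / μ - ⟪f' x, u⟫| ≤ 1 / 2 * L * μ + 2 * δ / μ := by
  have hexact := abs_sub_sub_inner_le_of_gradient_lipschitz hf hLip x (μ • u)
  rw [norm_smul, hu, Real.norm_of_nonneg hμ.le, mul_one, real_inner_smul_right] at hexact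
  calc |(fhat (x + μ • u) - fhat x) / μ - ⟪f' x, u⟫|
      = |fhat (x + μ • u) - fhat x - μ * ⟪f' x, u⟫| / μ := by
        rw [div_sub' hμ.ne', abs_div, abs_of_pos hμ]
    _ ≤ (|f (x + μ • u) - f x - μ * ⟪f' x, u⟫| + 2 * δ) / μ := by
        gcongr; exact abs_sub_sub_le_of_abs_sub_le happrox _ _ _
    _ ≤ (L / 2 * μ ^ 2 + 2 * δ) / μ := by gcongr
    _ = 1 / 2 * L * μ + 2 * δ / μ := by field_simp

theorem forward_difference_gradient_error_general
    {n : ℕ} (f fhat : EuclideanSpace ℝ (Fin n) → ℝ)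
    (f' : EuclideanSpace ℝ (Fin n) → EuclideanSpace ℝ (Fin n))
    (hf : ∀ x, HasGradientAt f (f' x) x)
    (L : ℝ) (hL : 0 < L)
    (hLip : ∀ y₁ y₂ : EuclideanSpace ℝ (Fin n), ‖f' y₁ - f' y₂‖ ≤ L * ‖y₁ - y₂‖)
    (δ : ℝ)
    (happrox : ∀ y, |fhat y - f y| ≤ δ) :
    ∀ (x : EuclideanSpace ℝ (Fin n)) (μ : ℝ), 0 < μ →
      (∀ i : Fin n,
        |(fhat (x + μ • EuclideanSpace.single i (1 : ℝ)) - fhat x) / μ - f' x i|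
          ≤ (1 / 2) * L * μ + 2 * δ / μ)
      ∧ ‖(fun i : Fin n =>
            (fhat (x + μ • EuclideanSpace.single i (1 : ℝ)) - fhat x) / μ - f' x i)‖
          ≤ (1 / 2) * L * μ + 2 * δ / μ := by
  intro x μ hμ
  have hcoord : ∀ i : Fin n,
      |(fhat (x + μ • EuclideanSpace.single i (1 : ℝ)) - fhat x) / μ - f' x i|
        ≤ (1 / 2) * L * μ + 2 * δ / μ := fun i => by
    simpa [EuclideanSpace.inner_single_right] using
      abs_forwardDifference_sub_inner_le hf hLip happrox x _
        (PiLp.norm_single 2 _ i 1 |>.trans norm_one) hμ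
  have hδ : 0 ≤ δ := (abs_nonneg _).trans (happrox x)
  exact ⟨hcoord, (pi_norm_le_iff_of_nonneg (by positivity)).2 hcoord⟩

/-- Forward-difference gradient estimation error with inexact function evaluations. -/
theorem forward_difference_gradient_error
    {n : ℕ} (f fhat : EuclideanSpace ℝ (Fin n) → ℝ)
    (f' : EuclideanSpace ℝ (Fin n) → EuclideanSpace ℝ (Fin n))
    (hf : ∀ x, HasGradientAt f (f' x) x)
    (L : ℝ) (hL : 0 < L)
    (hLip : ∀ y₁ y₂ : EuclideanSpace ℝ (Fin n), ‖f' y₁ - f' y₂‖ ≤ L * ‖y₁ - y₂‖)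
    (δ : ℝ) (hδ : 0 ≤ δ)
    (happrox : ∀ y, |fhat y - f y| ≤ δ) :
    ∀ (x : EuclideanSpace ℝ (Fin n)) (μ : ℝ), 0 < μ →
      (∀ i : Fin n,
        |(fhat (x + μ • EuclideanSpace.single i (1 : ℝ)) - fhat x) / μ - f' x i|
          ≤ (1 / 2) * L * μ + 2 * δ / μ)
      ∧ ‖(fun i : Fin n =>
            (fhat (x + μ • EuclideanSpace.single i (1 : ℝ)) - fhat x) / μ - f' x i)‖
          ≤ (1 / 2) * L * μ + 2 * δ / μ :=
  forward_difference_gradient_error_general f fhat f' hf L hL hLip δ happrox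
end

section
/- (Projection step with a smooth function.) Let C ⊆ ℝⁿ be a nonempty closed convex set, let φ : ℝⁿ → ℝ be differentiable with gradient that is L'-Lipschitz with respect to the Euclidean norm, let η > 0, and let x, u ∈ ℝⁿ. Let y = Π_C[x − ηu] be the Euclidean projection of x − ηu onto C. Then for every z ∈ C: φ(y) ≤ φ(z) + ⟨y − z, ∇φ(x) − u⟩ + (L'/2 − 1/(2η))‖y − x‖² + (L'/2 + 1/(2η))‖z − x‖² − (1/(2η))‖y − z‖². -/
/-!
By the descent lemma, `φ y` and `φ z` are bounded above and below by their first-order expansions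
at `x`, up to `L' / 2` times the squared distance to `x`. The variational inequality of the
projection, `⟪y - x + η • u, y - z⟫ ≤ 0`, combined with the three-point identity
`‖z - x‖² = ‖y - x‖² - 2 ⟪y - x, y - z⟫ + ‖y - z‖²`, bounds `⟪u, y - z⟫` and produces the
`1 / (2 η)` terms.
-/

open scoped RealInnerProductSpace
open Set

theorem norm_image_sub_sub_fderiv_le_of_lipschitz_fderiv
    {E F : Type*} [NormedAddCommGroup E] [NormedSpace ℝ E] [NormedAddCommGroup F] [NormedSpace ℝ F]
    {f : E → F} {f' : E → E →L[ℝ] F} {L : ℝ} (hf : ∀ w, HasFDerivAt f (f' w) w)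
    (hL : ∀ w₁ w₂, ‖f' w₁ - f' w₂‖ ≤ L * ‖w₁ - w₂‖) (a b : E) :
    ‖f b - f a - f' a (b - a)‖ ≤ L / 2 * ‖b - a‖ ^ 2 := by
  set d := b - a
  set g : ℝ → F := fun t => f (a + t • d) - f a - t • f' a d
  have hg : ∀ t, HasDerivAt g (f' (a + t • d) d - f' a d) t := fun t => by
    have hline : HasDerivAt (fun s : ℝ => a + s • d) d t := by
      simpa using ((hasDerivAt_id t).smul_const d).const_add a
    exact (((hf _).comp_hasDerivAt t hline).sub_const (f a)).sub
      (by simpa using (hasDerivAt_id t).smul_const (f' a d))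
  have hbound : ∀ t ∈ Ico (0 : ℝ) 1, ‖f' (a + t • d) d - f' a d‖ ≤ L * t * ‖d‖ ^ 2 := by
    rintro t ⟨ht, -⟩
    calc ‖f' (a + t • d) d - f' a d‖ = ‖(f' (a + t • d) - f' a) d‖ := rfl
      _ ≤ ‖f' (a + t • d) - f' a‖ * ‖d‖ := ContinuousLinearMap.le_opNorm _ _
      _ ≤ L * ‖t • d‖ * ‖d‖ := by gcongr; simpa using hL (a + t • d) a
      _ = L * t * ‖d‖ ^ 2 := by rw [norm_smul, Real.norm_of_nonneg ht]; ring
  have hB : ∀ t : ℝ, HasDerivAt (fun s : ℝ => L / 2 * s ^ 2 * ‖d‖ ^ 2) (L * t * ‖d‖ ^ 2) t :=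
    fun t => (((hasDerivAt_pow 2 t).const_mul (L / 2)).mul_const _).congr_deriv (by ring)
  -- `‖g'‖` is dominated by the derivative of the parabola, and both vanish at `0`.
  have hfence := image_norm_le_of_norm_deriv_right_le_deriv_boundary (f := g)
    (fun t _ => (hg t).continuousAt.continuousWithinAt) (fun t _ => (hg t).hasDerivWithinAt)
    (by simp [g]) hB hbound (right_mem_Icc.2 zero_le_one)
  simpa [g, d] using hfence

theorem abs_sub_sub_inner_le_of_lipschitz_gradient
    {E : Type*} [NormedAddCommGroup E] [InnerProductSpace ℝ E] [CompleteSpace E]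
    {f : E → ℝ} {f' : E → E} {L : ℝ} (hf : ∀ w, HasGradientAt f (f' w) w)
    (hL : ∀ w₁ w₂, ‖f' w₁ - f' w₂‖ ≤ L * ‖w₁ - w₂‖) (a b : E) :
    |f b - f a - ⟪f' a, b - a⟫| ≤ L / 2 * ‖b - a‖ ^ 2 := by
  have := norm_image_sub_sub_fderiv_le_of_lipschitz_fderiv
    (f' := fun w => InnerProductSpace.toDual ℝ E (f' w)) (fun w => (hf w).hasFDerivAt)
    (fun w₁ w₂ => by rw [← map_sub, LinearIsometryEquiv.norm_map]; exact hL w₁ w₂) a b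
  simpa [InnerProductSpace.toDual_apply_apply] using this

theorem real_inner_sub_le_zero_of_forall_norm_sub_le
    {F : Type*} [NormedAddCommGroup F] [InnerProductSpace ℝ F] {K : Set F} (hK : Convex ℝ K)
    {u v : F} (hv : v ∈ K) (hmin : ∀ w ∈ K, ‖v - u‖ ≤ ‖w - u‖) :
    ∀ w ∈ K, ⟪u - v, w - v⟫ ≤ 0 := by
  have : Nonempty K := ⟨⟨v, hv⟩⟩
  refine (norm_eq_iInf_iff_real_inner_le_zero hK hv).1 (le_antisymm ?_ ?_)
  · exact le_ciInf fun w => by simpa only [norm_sub_rev u] using hmin w w.2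
  · exact ciInf_le ⟨0, by rintro _ ⟨w, rfl⟩; positivity⟩ (⟨v, hv⟩ : K)

theorem projection_step_smooth_general
    {n : ℕ} (C : Set (EuclideanSpace ℝ (Fin n)))
    (hCconv : Convex ℝ C)
    (φ : EuclideanSpace ℝ (Fin n) → ℝ)
    (φ' : EuclideanSpace ℝ (Fin n) → EuclideanSpace ℝ (Fin n))
    (hdiff : ∀ w, HasGradientAt φ (φ' w) w)
    (L' : ℝ) (hLip : ∀ w₁ w₂ : EuclideanSpace ℝ (Fin n), ‖φ' w₁ - φ' w₂‖ ≤ L' * ‖w₁ - w₂‖)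
    (η : ℝ) (hη : 0 < η)
    (x u y : EuclideanSpace ℝ (Fin n))
    (hyC : y ∈ C)
    (hproj : ∀ z ∈ C, ‖y - (x - η • u)‖ ≤ ‖z - (x - η • u)‖) :
    ∀ z ∈ C,
      φ y ≤ φ z + ⟪y - z, φ' x - u⟫
        + (L' / 2 - 1 / (2 * η)) * ‖y - x‖ ^ 2
        + (L' / 2 + 1 / (2 * η)) * ‖z - x‖ ^ 2
        - (1 / (2 * η)) * ‖y - z‖ ^ 2 := by
  intro z hz
  have hvar : ⟪y - x, y - z⟫ + η * ⟪u, y - z⟫ ≤ 0 := by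
    have h := real_inner_sub_le_zero_of_forall_norm_sub_le hCconv hyC hproj z hz
    rwa [← neg_sub y z, inner_neg_right, show x - η • u - y = -(y - x + η • u) by abel,
      inner_neg_left, neg_neg, inner_add_left, real_inner_smul_left] at h
  have hthree : ‖z - x‖ ^ 2 = ‖y - x‖ ^ 2 - 2 * ⟪y - x, y - z⟫ + ‖y - z‖ ^ 2 := by
    rw [← norm_sub_sq_real, sub_sub_sub_cancel_left]
  have hstep : ⟪u, y - z⟫ ≤ 1 / (2 * η) * (‖z - x‖ ^ 2 - ‖y - x‖ ^ 2 - ‖y - z‖ ^ 2) := by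
    rw [hthree, one_div, ← div_eq_inv_mul, le_div_iff₀ (by positivity)]
    linarith
  have hsplit : ⟪y - z, φ' x - u⟫ = ⟪φ' x, y - x⟫ - ⟪φ' x, z - x⟫ - ⟪u, y - z⟫ := by
    rw [inner_sub_right, real_inner_comm, real_inner_comm u, ← inner_sub_right,
      sub_sub_sub_cancel_right]
  have hy := abs_le.1 (abs_sub_sub_inner_le_of_lipschitz_gradient hdiff hLip x y)
  have hz := abs_le.1 (abs_sub_sub_inner_le_of_lipschitz_gradient hdiff hLip x z)
  rw [hsplit]
  linarith [hy.2, hz.1]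

/-- Projection step with a smooth function (Lemma 5):
if `y = Π_C[x − ηu]`, then for every `z ∈ C`,
`φ(y) ≤ φ(z) + ⟨y − z, ∇φ(x) − u⟩ + (L'/2 − 1/(2η))‖y − x‖² + (L'/2 + 1/(2η))‖z − x‖²
  − (1/(2η))‖y − z‖²`. -/
theorem projection_step_smooth
    {n : ℕ} (C : Set (EuclideanSpace ℝ (Fin n)))
    (hCne : C.Nonempty) (hCclosed : IsClosed C) (hCconv : Convex ℝ C)
    (φ : EuclideanSpace ℝ (Fin n) → ℝ)
    (φ' : EuclideanSpace ℝ (Fin n) → EuclideanSpace ℝ (Fin n))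
    (hdiff : ∀ w, HasGradientAt φ (φ' w) w)
    (L' : ℝ) (hLip : ∀ w₁ w₂ : EuclideanSpace ℝ (Fin n), ‖φ' w₁ - φ' w₂‖ ≤ L' * ‖w₁ - w₂‖)
    (η : ℝ) (hη : 0 < η)
    (x u y : EuclideanSpace ℝ (Fin n))
    (hyC : y ∈ C)
    (hproj : ∀ z ∈ C, ‖y - (x - η • u)‖ ≤ ‖z - (x - η • u)‖) :
    ∀ z ∈ C,
      φ y ≤ φ z + ⟪y - z, φ' x - u⟫
        + (L' / 2 - 1 / (2 * η)) * ‖y - x‖ ^ 2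
        + (L' / 2 + 1 / (2 * η)) * ‖z - x‖ ^ 2
        - (1 / (2 * η)) * ‖y - z‖ ^ 2 :=
  projection_step_smooth_general C hCconv φ φ' hdiff L' hLip η hη x u y hyC hproj
end

section
/- (Per-step fixed-point residual bound with inexact gradients.) Let C ⊆ ℝⁿ be a nonempty closed convex set, let φ : ℝⁿ → ℝ be differentiable with gradient that is L'-Lipschitz with respect to the Euclidean norm (L' > 0), and let η satisfy 0 < η < 1/(2L'). Let p ∈ C, let Φ̂ ∈ ℝⁿ be an arbitrary (inexact) gradient surrogate, and define the inexact update p⁺ = Π_C[p − ηΦ̂], the exact update p̄⁺ = Π_C[p − η∇φ(p)], and the fixed-point residual G(p) = (1/η)(p − p̄⁺). Then ‖G(p)‖² ≤ (2/(η(1 − 2ηL'))) · (φ(p) − φ(p⁺) + (η/2)‖∇φ(p) − Φ̂‖²). -/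
/-!
Test the variational inequality of the exact projection `p̄⁺` at `p` and that of the inexact
projection `p⁺` at `p̄⁺`, add the descent lemma for `φ` along `p → p⁺`, and absorb the
gradient error by Young's inequality. This gives
`‖p - p̄⁺‖² + (1 - ηL')‖p - p⁺‖² ≤ 2η(φ p - φ p⁺) + η²‖∇φ p - Φ̂‖²`,
and since `0 ≤ ηL' < 1/2` the left side dominates `(1 - 2ηL')‖p - p̄⁺‖²`.
-/

open RealInnerProductSpace

variable {F : Type*} [NormedAddCommGroup F] [InnerProductSpace ℝ F]

theorem real_inner_sub_le_zero_of_isMinOn_norm_sub {C : Set F} (hC : Convex ℝ C) {u v : F}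
    (hv : v ∈ C) (hmin : IsMinOn (fun z => ‖z - u‖) C v) : ∀ z ∈ C, ⟪u - v, z - v⟫ ≤ 0 := by
  refine (norm_eq_iInf_iff_real_inner_le_zero hC hv).1 (le_antisymm ?_ ?_)
  · have : Nonempty C := ⟨⟨v, hv⟩⟩
    exact le_ciInf fun z => by simpa only [norm_sub_rev u] using isMinOn_iff.1 hmin z z.2
  · exact ciInf_le ⟨0, Set.forall_mem_range.2 fun _ => norm_nonneg _⟩ (⟨v, hv⟩ : C)

theorem HasGradientAt.hasDerivAt_comp_add_smul_s4 [CompleteSpace F] {φ : F → ℝ} {g x d : F} {s : ℝ}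
    (hφ : HasGradientAt φ g (x + s • d)) :
    HasDerivAt (fun t : ℝ => φ (x + t • d)) ⟪g, d⟫ s := by
  have hline : HasDerivAt (fun t : ℝ => x + t • d) d s := by
    simpa using ((hasDerivAt_id s).smul_const d).const_add x
  simpa [InnerProductSpace.toDual_apply_apply, Function.comp_def] using
    hφ.hasFDerivAt.comp_hasDerivAt s hline

theorem le_add_inner_add_of_lipschitz_gradient [CompleteSpace F] {φ : F → ℝ} {φ' : F → F}
    (hφ : ∀ w, HasGradientAt φ (φ' w) w) {L : ℝ}
    (hL : ∀ w₁ w₂, ‖φ' w₁ - φ' w₂‖ ≤ L * ‖w₁ - w₂‖) (x y : F) :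
    φ y ≤ φ x + ⟪φ' x, y - x⟫ + L / 2 * ‖y - x‖ ^ 2 := by
  set d := y - x
  let h : ℝ → ℝ := fun s => φ (x + s • d) - s * ⟪φ' x, d⟫ - L / 2 * s ^ 2 * ‖d‖ ^ 2
  have hderiv (s : ℝ) :
      HasDerivAt h (⟪φ' (x + s • d) - φ' x, d⟫ - L * s * ‖d‖ ^ 2) s := by
    have := ((hφ (x + s • d)).hasDerivAt_comp_add_smul_s4.sub
      ((hasDerivAt_id s).mul_const ⟪φ' x, d⟫)).sub
      (((hasDerivAt_pow 2 s).const_mul (L / 2)).mul_const (‖d‖ ^ 2))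
    refine this.congr_deriv ?_
    rw [inner_sub_left]; push_cast; ring
  have hanti : AntitoneOn h (Set.Ici 0) := by
    refine antitoneOn_of_hasDerivWithinAt_nonpos (convex_Ici 0)
      (fun s _ => (hderiv s).continuousAt.continuousWithinAt)
      (fun s _ => (hderiv s).hasDerivWithinAt) fun s hs => ?_
    rw [interior_Ici, Set.mem_Ioi] at hs
    have hgrad : ‖φ' (x + s • d) - φ' x‖ ≤ L * s * ‖d‖ := by
      simpa [norm_smul, abs_of_pos hs, mul_assoc] using hL (x + s • d) x
    have := real_inner_le_norm (φ' (x + s • d) - φ' x) d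
    nlinarith [mul_le_mul_of_nonneg_right hgrad (norm_nonneg d)]
  have h01 : h 1 ≤ h 0 := hanti Set.self_mem_Ici (Set.mem_Ici.2 zero_le_one) zero_le_one
  simp only [h, one_smul, zero_smul, add_zero, d, add_sub_cancel] at h01
  linarith

theorem norm_sub_sq_add_le_of_inexact_projected_gradient_step {φ : F → ℝ} {L η : ℝ}
    (hη : 0 ≤ η) {x g ĝ xbar xplus : F}
    (hdescent : φ xplus ≤ φ x + ⟪g, xplus - x⟫ + L / 2 * ‖xplus - x‖ ^ 2)
    (hbar : ⟪x - η • g - xbar, x - xbar⟫ ≤ 0)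
    (hplus : ⟪x - η • ĝ - xplus, xbar - xplus⟫ ≤ 0) :
    ‖x - xbar‖ ^ 2 + (1 - η * L) * ‖x - xplus‖ ^ 2
      ≤ 2 * η * (φ x - φ xplus) + η ^ 2 * ‖g - ĝ‖ ^ 2 := by
  set a := x - xbar
  set b := xbar - xplus
  have hab : x - xplus = a + b := by simp only [a, b, sub_add_sub_cancel]
  have ha : ‖a‖ ^ 2 ≤ η * ⟪g, a⟫ := by
    rw [show x - η • g - xbar = a - η • g by simp only [a]; abel, inner_sub_left,
      real_inner_smul_left, real_inner_self_eq_norm_sq] at hbar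
    linarith [real_inner_comm a g]
  have hb : ⟪a, b⟫ + ‖b‖ ^ 2 ≤ η * ⟪ĝ, b⟫ := by
    rw [show x - η • ĝ - xplus = a + b - η • ĝ by rw [← hab]; abel, inner_sub_left,
      inner_add_left, real_inner_smul_left, real_inner_self_eq_norm_sq] at hplus
    linarith
  have hyoung : -(η ^ 2 * ‖g - ĝ‖ ^ 2 + ‖b‖ ^ 2) ≤ 2 * η * ⟪g - ĝ, b⟫ := by
    have := norm_add_sq_real (η • (g - ĝ)) b
    rw [norm_smul, real_inner_smul_left, Real.norm_eq_abs, mul_pow, sq_abs] at this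
    linarith [sq_nonneg ‖η • (g - ĝ) + b‖]
  have hdescent' : φ xplus ≤ φ x - ⟪g, a⟫ - ⟪g, b⟫ + L / 2 * ‖a + b‖ ^ 2 := by
    rw [show xplus - x = -(a + b) by rw [← hab, neg_sub], norm_neg, inner_neg_right,
      inner_add_right] at hdescent
    linarith
  have hsq := norm_add_sq_real a b
  rw [inner_sub_left] at hyoung
  rw [hab]
  linarith [mul_le_mul_of_nonneg_left hdescent' (by positivity : 0 ≤ 2 * η)]

theorem fixed_point_residual_bound_general
    {n : ℕ} (C : Set (EuclideanSpace ℝ (Fin n)))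
    (hCconv : Convex ℝ C)
    (φ : EuclideanSpace ℝ (Fin n) → ℝ)
    (φ' : EuclideanSpace ℝ (Fin n) → EuclideanSpace ℝ (Fin n))
    (hdiff : ∀ w, HasGradientAt φ (φ' w) w)
    (L' : ℝ) (hL' : 0 < L')
    (hLip : ∀ w₁ w₂ : EuclideanSpace ℝ (Fin n), ‖φ' w₁ - φ' w₂‖ ≤ L' * ‖w₁ - w₂‖)
    (η : ℝ) (hη : 0 < η) (hη' : η < 1 / (2 * L'))
    (p Φhat pplus pbar : EuclideanSpace ℝ (Fin n))
    (hpC : p ∈ C)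
    (hpplusC : pplus ∈ C)
    (hpplusProj : ∀ z ∈ C, ‖pplus - (p - η • Φhat)‖ ≤ ‖z - (p - η • Φhat)‖)
    (hpbarC : pbar ∈ C)
    (hpbarProj : ∀ z ∈ C, ‖pbar - (p - η • φ' p)‖ ≤ ‖z - (p - η • φ' p)‖) :
    ‖(1 / η) • (p - pbar)‖ ^ 2
      ≤ (2 / (η * (1 - 2 * η * L')))
        * (φ p - φ pplus + (η / 2) * ‖φ' p - Φhat‖ ^ 2) := by
  have hηL : 2 * η * L' < 1 := by
    have := (lt_div_iff₀ (by positivity)).1 hη'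
    linarith
  have hstep := norm_sub_sq_add_le_of_inexact_projected_gradient_step hη.le
    (le_add_inner_add_of_lipschitz_gradient hdiff hLip p pplus)
    (real_inner_sub_le_zero_of_isMinOn_norm_sub hCconv hpbarC hpbarProj p hpC)
    (real_inner_sub_le_zero_of_isMinOn_norm_sub hCconv hpplusC hpplusProj pbar hpbarC)
  have hres : (1 - 2 * η * L') * ‖p - pbar‖ ^ 2
      ≤ 2 * η * (φ p - φ pplus) + η ^ 2 * ‖φ' p - Φhat‖ ^ 2 := by
    nlinarith [mul_pos hη hL', sq_nonneg ‖p - pbar‖, sq_nonneg ‖p - pplus‖]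
  calc ‖(1 / η) • (p - pbar)‖ ^ 2 = ‖p - pbar‖ ^ 2 / η ^ 2 := by
        rw [norm_smul, Real.norm_of_nonneg (by positivity), mul_pow, one_div, inv_pow,
          inv_mul_eq_div]
    _ ≤ (2 * η * (φ p - φ pplus) + η ^ 2 * ‖φ' p - Φhat‖ ^ 2) / ((1 - 2 * η * L') * η ^ 2) := by
        rw [← div_div, div_le_div_iff_of_pos_right (by positivity), le_div_iff₀' (by linarith)]
        exact hres
    _ = _ := by field_simp

/-- Per-step fixed-point residual bound with inexact gradients:
with `p⁺ = Π_C[p − ηΦ̂]`, `p̄⁺ = Π_C[p − η∇φ(p)]` and `G(p) = (1/η)(p − p̄⁺)`,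
for `0 < η < 1/(2L')`,
`‖G(p)‖² ≤ (2/(η(1 − 2ηL'))) (φ(p) − φ(p⁺) + (η/2)‖∇φ(p) − Φ̂‖²)`. -/
theorem fixed_point_residual_bound
    {n : ℕ} (C : Set (EuclideanSpace ℝ (Fin n)))
    (hCne : C.Nonempty) (hCclosed : IsClosed C) (hCconv : Convex ℝ C)
    (φ : EuclideanSpace ℝ (Fin n) → ℝ)
    (φ' : EuclideanSpace ℝ (Fin n) → EuclideanSpace ℝ (Fin n))
    (hdiff : ∀ w, HasGradientAt φ (φ' w) w)
    (L' : ℝ) (hL' : 0 < L')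
    (hLip : ∀ w₁ w₂ : EuclideanSpace ℝ (Fin n), ‖φ' w₁ - φ' w₂‖ ≤ L' * ‖w₁ - w₂‖)
    (η : ℝ) (hη : 0 < η) (hη' : η < 1 / (2 * L'))
    (p Φhat pplus pbar : EuclideanSpace ℝ (Fin n))
    (hpC : p ∈ C)
    (hpplusC : pplus ∈ C)
    (hpplusProj : ∀ z ∈ C, ‖pplus - (p - η • Φhat)‖ ≤ ‖z - (p - η • Φhat)‖)
    (hpbarC : pbar ∈ C)
    (hpbarProj : ∀ z ∈ C, ‖pbar - (p - η • φ' p)‖ ≤ ‖z - (p - η • φ' p)‖) :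
    ‖(1 / η) • (p - pbar)‖ ^ 2
      ≤ (2 / (η * (1 - 2 * η * L')))
        * (φ p - φ pplus + (η / 2) * ‖φ' p - Φhat‖ ^ 2) :=
  fixed_point_residual_bound_general C hCconv φ φ' hdiff L' hL' hLip η hη hη' p Φhat pplus pbar hpC
    hpplusC hpplusProj hpbarC hpbarProj
end

section
/- (Observability Gramian sandwich under persistency of excitation.) Let v₁, …, v_S ∈ ℝⁿ and let R₁, …, R_S be real symmetric n×n matrices such that there exist constants 0 < α₁ ≤ α₂ with α₁·Iₙ ⪯ R_l ⪯ α₂·Iₙ (i.e., R_l − α₁ Iₙ and α₂ Iₙ − R_l are positive semidefinite) for every l; in particular each R_l is invertible. Suppose there exist constants β₁ > 0 and β₂ such that β₁·Iₙ ⪯ Σ_{l=1}^S v_l v_lᵀ ⪯ β₂·Iₙ. Then the n²×n² Gramian W := Σ_{l=1}^S (v_l v_lᵀ) ⊗ R_l^{-1} satisfies (β₁/α₂)·I_{n²} ⪯ W ⪯ (β₂/α₁)·I_{n²}; in particular W is positive definite. -/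
open scoped Kronecker

/-!
In the Loewner order, `α₁ ≤ R_l ≤ α₂` gives `α₂⁻¹ ≤ R_l⁻¹ ≤ α₁⁻¹` by comparing spectra. Since the
Kronecker product with a positive semidefinite factor is monotone in the other factor, `W` lies
between `V ⊗ α₂⁻¹ I` and `V ⊗ α₁⁻¹ I`, where `V = Σ_l v_l v_lᵀ`, and monotonicity in `V` then
brings in `β₁ ≤ V ≤ β₂`.
-/

open scoped MatrixOrder ComplexOrder

namespace Matrix

section Kronecker

variable {R l m n p : Type*}

theorem kronecker_sub [NonUnitalNonAssocRing R] (A : Matrix l m R) (B C : Matrix n p R) :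
    A ⊗ₖ (B - C) = A ⊗ₖ B - A ⊗ₖ C := by
  ext ⟨i, j⟩ ⟨k, k'⟩
  simp [mul_sub]

theorem sub_kronecker [NonUnitalNonAssocRing R] (A B : Matrix l m R) (C : Matrix n p R) :
    (A - B) ⊗ₖ C = A ⊗ₖ C - B ⊗ₖ C := by
  ext ⟨i, j⟩ ⟨k, k'⟩
  simp [sub_mul]

theorem sum_kronecker {ι : Type*} [NonUnitalNonAssocSemiring R] (s : Finset ι)
    (A : ι → Matrix l m R) (B : Matrix n p R) :
    (∑ i ∈ s, A i) ⊗ₖ B = ∑ i ∈ s, A i ⊗ₖ B := by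
  ext ⟨i, j⟩ ⟨k, k'⟩
  simp [Matrix.sum_apply, Finset.sum_mul]

theorem smul_one_kronecker_smul_one [CommSemiring R] [DecidableEq m] [DecidableEq n] (a b : R) :
    (a • 1 : Matrix m m R) ⊗ₖ (b • 1 : Matrix n n R) = (a * b) • 1 := by
  rw [smul_kronecker, kronecker_smul, one_kronecker_one, smul_smul]

end Kronecker

variable {𝕜 m n : Type*} [RCLike 𝕜]

section KroneckerMono

variable [Finite m] [Finite n]

theorem kronecker_le_kronecker_of_nonneg_left {A : Matrix m m 𝕜} {B C : Matrix n n 𝕜}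
    (h : B ≤ C) (hA : 0 ≤ A) : A ⊗ₖ B ≤ A ⊗ₖ C := by
  rw [le_iff, ← kronecker_sub]
  exact (nonneg_iff_posSemidef.mp hA).kronecker (le_iff.mp h)

theorem kronecker_le_kronecker_of_nonneg_right {A B : Matrix m m 𝕜} {C : Matrix n n 𝕜}
    (h : A ≤ B) (hC : 0 ≤ C) : A ⊗ₖ C ≤ B ⊗ₖ C := by
  rw [le_iff, ← sub_kronecker]
  exact (le_iff.mp h).kronecker (nonneg_iff_posSemidef.mp hC)

end KroneckerMono

variable [DecidableEq n]

theorem smul_one_nonneg {c : ℝ} (hc : 0 ≤ c) : 0 ≤ (c • 1 : Matrix n n 𝕜) :=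
  (PosSemidef.one.smul hc).nonneg

theorem posDef_of_smul_one_le {A : Matrix n n 𝕜} {c : ℝ} (hc : 0 < c) (h : c • 1 ≤ A) :
    A.PosDef := by
  simpa using (PosDef.one.smul hc).add_posSemidef (le_iff.mp h)

variable [Fintype n]

theorem PosDef.nonsing_inv_eq_cfc_inv {A : Matrix n n 𝕜} (hA : A.PosDef) :
    A⁻¹ = cfc (fun x : ℝ => x⁻¹) A := by
  rw [nonsing_inv_eq_ringInverse, cfc_ringInverse_id (R := ℝ) (a := A) hA.isUnit]

theorem nonsing_inv_le_smul_one {A : Matrix n n 𝕜} {c : ℝ} (hc : 0 < c) (h : c • 1 ≤ A) :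
    A⁻¹ ≤ c⁻¹ • 1 := by
  have hA := posDef_of_smul_one_le hc h
  have hspec : ∀ x ∈ spectrum ℝ A, c ≤ x := by
    rw [← algebraMap_le_iff_le_spectrum (ha := hA.isHermitian.isSelfAdjoint),
      Algebra.algebraMap_eq_smul_one]
    exact h
  have hcont : ContinuousOn (fun x : ℝ => x⁻¹) (spectrum ℝ A) :=
    continuousOn_inv₀.mono fun x hx => (hc.trans_le (hspec x hx)).ne'
  rw [hA.nonsing_inv_eq_cfc_inv, ← Algebra.algebraMap_eq_smul_one,
    cfc_le_algebraMap_iff _ _ _ hcont hA.isHermitian.isSelfAdjoint]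
  exact fun x hx => inv_anti₀ hc (hspec x hx)

theorem PosDef.smul_one_le_nonsing_inv {A : Matrix n n 𝕜} (hA : A.PosDef) {c : ℝ}
    (h : A ≤ c • 1) : c⁻¹ • 1 ≤ A⁻¹ := by
  have hspec : ∀ x ∈ spectrum ℝ A, x ≤ c := by
    rw [← le_algebraMap_iff_spectrum_le (ha := hA.isHermitian.isSelfAdjoint),
      Algebra.algebraMap_eq_smul_one]
    exact h
  have hpos : ∀ x ∈ spectrum ℝ A, 0 < x := fun x hx => hA.isStrictlyPositive.spectrum_pos hx
  have hcont : ContinuousOn (fun x : ℝ => x⁻¹) (spectrum ℝ A) :=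
    continuousOn_inv₀.mono fun x hx => (hpos x hx).ne'
  rw [hA.nonsing_inv_eq_cfc_inv, ← Algebra.algebraMap_eq_smul_one,
    algebraMap_le_cfc_iff _ _ _ hcont hA.isHermitian.isSelfAdjoint]
  exact fun x hx => inv_anti₀ (hpos x hx) (hspec x hx)

end Matrix

open Matrix

theorem observability_gramian_sandwich_general
    {n : ℕ} {S : ℕ}
    (v : Fin S → (Fin n → ℝ))
    (R : Fin S → Matrix (Fin n) (Fin n) ℝ)
    (α₁ α₂ : ℝ) (hα₁ : 0 < α₁) (hα₁₂ : α₁ ≤ α₂)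
    (hRlow : ∀ l, (R l - α₁ • (1 : Matrix (Fin n) (Fin n) ℝ)).PosSemidef)
    (hRup : ∀ l, (α₂ • (1 : Matrix (Fin n) (Fin n) ℝ) - R l).PosSemidef)
    (β₁ β₂ : ℝ) (hβ₁ : 0 < β₁)
    (hVlow : ((∑ l, Matrix.vecMulVec (v l) (v l)) - β₁ • (1 : Matrix (Fin n) (Fin n) ℝ)).PosSemidef)
    (hVup : (β₂ • (1 : Matrix (Fin n) (Fin n) ℝ) - ∑ l, Matrix.vecMulVec (v l) (v l)).PosSemidef) :
    (∀ l, IsUnit (R l))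
    ∧ ((∑ l, Matrix.vecMulVec (v l) (v l) ⊗ₖ (R l)⁻¹)
        - (β₁ / α₂) • (1 : Matrix (Fin n × Fin n) (Fin n × Fin n) ℝ)).PosSemidef
    ∧ ((β₂ / α₁) • (1 : Matrix (Fin n × Fin n) (Fin n × Fin n) ℝ)
        - ∑ l, Matrix.vecMulVec (v l) (v l) ⊗ₖ (R l)⁻¹).PosSemidef
    ∧ (∑ l, Matrix.vecMulVec (v l) (v l) ⊗ₖ (R l)⁻¹).PosDef := by
  have hα₂ : 0 < α₂ := hα₁.trans_le hα₁₂
  have hRpd : ∀ l, (R l).PosDef := fun l => posDef_of_smul_one_le hα₁ (hRlow l)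
  have hvv : ∀ l, 0 ≤ vecMulVec (v l) (v l) := fun l =>
    (posSemidef_vecMulVec_self_star (v l)).nonneg
  have hlow : (β₁ / α₂) • 1 ≤ ∑ l, vecMulVec (v l) (v l) ⊗ₖ (R l)⁻¹ := calc
    (β₁ / α₂) • (1 : Matrix (Fin n × Fin n) (Fin n × Fin n) ℝ)
        = (β₁ • 1 : Matrix (Fin n) (Fin n) ℝ) ⊗ₖ (α₂⁻¹ • 1 : Matrix (Fin n) (Fin n) ℝ) := by
      rw [smul_one_kronecker_smul_one, div_eq_mul_inv]
    _ ≤ (∑ l, vecMulVec (v l) (v l)) ⊗ₖ (α₂⁻¹ • 1) :=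
      kronecker_le_kronecker_of_nonneg_right hVlow (smul_one_nonneg (inv_pos.mpr hα₂).le)
    _ = ∑ l, vecMulVec (v l) (v l) ⊗ₖ (α₂⁻¹ • 1) := sum_kronecker _ _ _
    _ ≤ _ := Finset.sum_le_sum fun l _ =>
      kronecker_le_kronecker_of_nonneg_left ((hRpd l).smul_one_le_nonsing_inv (hRup l)) (hvv l)
  have hup : ∑ l, vecMulVec (v l) (v l) ⊗ₖ (R l)⁻¹ ≤ (β₂ / α₁) • 1 := calc
    _ ≤ ∑ l, vecMulVec (v l) (v l) ⊗ₖ (α₁⁻¹ • 1 : Matrix (Fin n) (Fin n) ℝ) :=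
      Finset.sum_le_sum fun l _ =>
        kronecker_le_kronecker_of_nonneg_left (nonsing_inv_le_smul_one hα₁ (hRlow l)) (hvv l)
    _ = (∑ l, vecMulVec (v l) (v l)) ⊗ₖ (α₁⁻¹ • 1) := (sum_kronecker _ _ _).symm
    _ ≤ (β₂ • 1 : Matrix (Fin n) (Fin n) ℝ) ⊗ₖ (α₁⁻¹ • 1) :=
      kronecker_le_kronecker_of_nonneg_right hVup (smul_one_nonneg (inv_pos.mpr hα₁).le)
    _ = (β₂ / α₁) • 1 := by rw [smul_one_kronecker_smul_one, div_eq_mul_inv]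
  exact ⟨fun l => (hRpd l).isUnit, hlow, hup, posDef_of_smul_one_le (div_pos hβ₁ hα₂) hlow⟩

/-- Observability Gramian sandwich under persistency of excitation:
if `α₁ Iₙ ⪯ R_l ⪯ α₂ Iₙ` (so each `R_l` is invertible) and
`β₁ Iₙ ⪯ Σ_l v_l v_lᵀ ⪯ β₂ Iₙ` with `β₁ > 0`, then
`(β₁/α₂) I ⪯ W := Σ_l (v_l v_lᵀ) ⊗ R_l⁻¹ ⪯ (β₂/α₁) I`, and `W` is positive definite. -/
theorem observability_gramian_sandwich
    {n : ℕ} {S : ℕ}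
    (v : Fin S → (Fin n → ℝ))
    (R : Fin S → Matrix (Fin n) (Fin n) ℝ)
    (hRsymm : ∀ l, (R l).IsSymm)
    (α₁ α₂ : ℝ) (hα₁ : 0 < α₁) (hα₁₂ : α₁ ≤ α₂)
    (hRlow : ∀ l, (R l - α₁ • (1 : Matrix (Fin n) (Fin n) ℝ)).PosSemidef)
    (hRup : ∀ l, (α₂ • (1 : Matrix (Fin n) (Fin n) ℝ) - R l).PosSemidef)
    (β₁ β₂ : ℝ) (hβ₁ : 0 < β₁)
    (hVlow : ((∑ l, Matrix.vecMulVec (v l) (v l)) - β₁ • (1 : Matrix (Fin n) (Fin n) ℝ)).PosSemidef)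
    (hVup : (β₂ • (1 : Matrix (Fin n) (Fin n) ℝ) - ∑ l, Matrix.vecMulVec (v l) (v l)).PosSemidef) :
    (∀ l, IsUnit (R l))
    ∧ ((∑ l, Matrix.vecMulVec (v l) (v l) ⊗ₖ (R l)⁻¹)
        - (β₁ / α₂) • (1 : Matrix (Fin n × Fin n) (Fin n × Fin n) ℝ)).PosSemidef
    ∧ ((β₂ / α₁) • (1 : Matrix (Fin n × Fin n) (Fin n × Fin n) ℝ)
        - ∑ l, Matrix.vecMulVec (v l) (v l) ⊗ₖ (R l)⁻¹).PosSemidef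
    ∧ (∑ l, Matrix.vecMulVec (v l) (v l) ⊗ₖ (R l)⁻¹).PosDef :=
  observability_gramian_sandwich_general v R α₁ α₂ hα₁ hα₁₂ hRlow hRup β₁ β₂ hβ₁ hVlow hVup
end

section
/- (Exponential stability of the extended Friedkin–Johnsen model.) In the extended FJ model with constant p, d ∈ ℝⁿ, let h(p,d) = (Iₙ − M)^{-1}(Γ_p p + Γ_d d) be the unique steady state and let ρ := max_i (1 − γ_{p,i} − γ_{d,i}), so that 0 ≤ ρ < 1. Then for every initial condition x⁰ ∈ ℝⁿ, the iterates x^{k+1} = M x^k + Γ_p p + Γ_d d satisfy ‖x^k − h(p,d)‖_∞ ≤ ρ^k · ‖x⁰ − h(p,d)‖_∞ for all k ∈ ℕ, where ‖·‖_∞ denotes the sup-norm on ℝⁿ; in particular x^k converges to h(p,d) exponentially fast. -/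
open Matrix Finset

lemma FJ_contract {n : ℕ} (M : Matrix (Fin n) (Fin n) ℝ) (ρ : ℝ) (hρ0 : 0 ≤ ρ)
    (hM_nonneg : ∀ i j, 0 ≤ M i j) (hM_row : ∀ i, ∑ j, M i j ≤ ρ)
    (v : Fin n → ℝ) : ‖M.mulVec v‖ ≤ ρ * ‖v‖ := by
  rw [pi_norm_le_iff_of_nonneg (by positivity)]
  intro i
  calc ‖(M.mulVec v) i‖ = |∑ j, M i j * v j| := by rw [Matrix.mulVec, dotProduct]; rfl
    _ ≤ ∑ j, |M i j * v j| := Finset.abs_sum_le_sum_abs _ _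
    _ ≤ ∑ j, M i j * ‖v‖ := by
        refine Finset.sum_le_sum fun j _ => ?_
        rw [abs_mul, abs_of_nonneg (hM_nonneg i j)]
        exact mul_le_mul_of_nonneg_left (norm_le_pi_norm v j) (hM_nonneg i j)
    _ = (∑ j, M i j) * ‖v‖ := by rw [Finset.sum_mul]
    _ ≤ ρ * ‖v‖ := mul_le_mul_of_nonneg_right (hM_row i) (norm_nonneg v)

/-- Exponential stability of the extended Friedkin–Johnsen model:
with `ρ = max_i (1 − γ_{p,i} − γ_{d,i})` one has `0 ≤ ρ < 1`, and every trajectory of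
`x^{k+1} = M x^k + Γ_p p + Γ_d d` satisfies
`‖x^k − h(p,d)‖_∞ ≤ ρ^k ‖x⁰ − h(p,d)‖_∞`. -/
theorem extended_FJ_exponential_stability
    {n : ℕ} (hn : 0 < n)
    (A : Matrix (Fin n) (Fin n) ℝ)
    (hA_nonneg : ∀ i j, 0 ≤ A i j)
    (hA_row : ∀ i, ∑ j, A i j = 1)
    (γp γd : Fin n → ℝ)
    (hγp : ∀ i, 0 < γp i) (hγd : ∀ i, 0 < γd i)
    (hγ_sum : ∀ i, γp i + γd i ≤ 1)
    (M : Matrix (Fin n) (Fin n) ℝ)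
    (hM : M = (1 - Matrix.diagonal γp - Matrix.diagonal γd) * A)
    (ρ : ℝ) (hρ : IsGreatest (Set.range fun i => 1 - γp i - γd i) ρ)
    (p d : Fin n → ℝ)
    (h : Fin n → ℝ)
    (hh : h = (1 - M)⁻¹.mulVec ((Matrix.diagonal γp).mulVec p + (Matrix.diagonal γd).mulVec d)) :
    0 ≤ ρ ∧ ρ < 1
    ∧ ∀ (x : ℕ → Fin n → ℝ),
      (∀ k, x (k + 1) = M.mulVec (x k) + (Matrix.diagonal γp).mulVec p
        + (Matrix.diagonal γd).mulVec d) →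
      ∀ k : ℕ, ‖x k - h‖ ≤ ρ ^ k * ‖x 0 - h‖ := by
  obtain ⟨⟨i₀, hi₀⟩, hub⟩ := hρ
  have hi₀' : 1 - γp i₀ - γd i₀ = ρ := hi₀
  have hρ0 : 0 ≤ ρ := by linarith [hγ_sum i₀]
  have hρ1 : ρ < 1 := by linarith [hγp i₀, hγd i₀]
  refine ⟨hρ0, hρ1, ?_⟩
  -- entries of M
  have hMij : ∀ i j, M i j = (1 - γp i - γd i) * A i j := by
    intro i j
    simp [hM, Matrix.mul_apply, Matrix.sub_apply, Matrix.one_apply, Matrix.diagonal_apply,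
      sub_mul, ite_mul, Finset.sum_ite_eq, Finset.sum_sub_distrib]
  have hM_nonneg : ∀ i j, 0 ≤ M i j := fun i j => by
    rw [hMij]
    exact mul_nonneg (by linarith [hγ_sum i]) (hA_nonneg i j)
  have hM_row : ∀ i, ∑ j, M i j ≤ ρ := by
    intro i
    have : ∑ j, M i j = 1 - γp i - γd i := by
      simp only [hMij, ← Finset.mul_sum, hA_row i, mul_one]
    rw [this]
    exact hub ⟨i, rfl⟩
  have contract := FJ_contract M ρ hρ0 hM_nonneg hM_row
  -- invertibility of 1 - M
  have hinj : Function.Injective (1 - M).mulVec := by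
    intro u w huw
    have key : u - w = M.mulVec (u - w) := by
      have h1 : ∀ v : Fin n → ℝ, (1 - M).mulVec v = v - M.mulVec v := by
        intro v; rw [Matrix.sub_mulVec, Matrix.one_mulVec]
      have := huw
      rw [h1, h1] at this
      have h2 : u - w = M.mulVec u - M.mulVec w := sub_eq_sub_iff_sub_eq_sub.mp this
      rw [Matrix.mulVec_sub]; exact h2
    by_contra hne
    have hpos : 0 < ‖u - w‖ := by
      rw [norm_pos_iff]; exact fun hz => hne (sub_eq_zero.mp hz)
    have := contract (u - w)
    rw [← key] at this
    nlinarith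
  have hunit : IsUnit (1 - M).det := (Matrix.isUnit_iff_isUnit_det _).mp (Matrix.mulVec_injective_iff_isUnit.mp hinj)
  set b := (Matrix.diagonal γp).mulVec p + (Matrix.diagonal γd).mulVec d with hb
  have hfix : h = M.mulVec h + b := by
    have h1 : (1 - M).mulVec h = b := by
      rw [hh, Matrix.mulVec_mulVec, Matrix.mul_nonsing_inv _ hunit, Matrix.one_mulVec]
    have : h - M.mulVec h = b := by
      rw [← h1, Matrix.sub_mulVec, Matrix.one_mulVec]
    rw [← this]; abel
  intro x hx
  have hdiff : ∀ k, x (k + 1) - h = M.mulVec (x k - h) := by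
    intro k
    rw [hx k, Matrix.mulVec_sub]
    nth_rewrite 1 [hfix]
    rw [hb]
    abel
  intro k
  induction k with
  | zero => simp
  | succ k ih =>
    calc ‖x (k + 1) - h‖ = ‖M.mulVec (x k - h)‖ := by rw [hdiff]
      _ ≤ ρ * ‖x k - h‖ := contract _
      _ ≤ ρ * (ρ ^ k * ‖x 0 - h‖) := mul_le_mul_of_nonneg_left ih hρ0
      _ = ρ ^ (k + 1) * ‖x 0 - h‖ := by ring
end
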